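/- arXiv:1803.09871 — 2 statements merged into one kernel-verified Lean document; each statement's English description precedes it below -/
import Mathlib

section
/- Let π' be an arbitrary probability distribution on 𝕏. For every distortion level D > 0, the operational rate-distortion function under the expected distortion criterion of the Markov source X_{[π',P]} equals that of the Markov source started in the stationary distribution: R^E_{X_{[π',P]}}(D) = R^E_{X_{[π,P]}}(D). -/
open Filter Finset

/-- `μ` is a probability distribution on the finite set `𝕏`. -/
def IsProbDist {𝕏 : Type} [Fintype 𝕏] (μ : 𝕏 → ℝ) : Prop :=
  (∀ x, 0 ≤ μ x) ∧ ∑ x, μ x = 1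

/-- `P` is a stochastic (transition probability) matrix on `𝕏`. -/
def IsStochastic {𝕏 : Type} [Fintype 𝕏] (P : 𝕏 → 𝕏 → ℝ) : Prop :=
  (∀ x y, 0 ≤ P x y) ∧ ∀ x, ∑ y, P x y = 1

/-- `n`-th power of the transition matrix `P`. -/
def matPow {𝕏 : Type} [Fintype 𝕏] [DecidableEq 𝕏] (P : 𝕏 → 𝕏 → ℝ) : ℕ → 𝕏 → 𝕏 → ℝ
  | 0 => fun x y => if x = y then 1 else 0
  | n + 1 => fun x y => ∑ z, matPow P n x z * P z y

/-- Irreducible and aperiodic chain on a finite state space, i.e. primitive transition matrix: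
some power of `P` has all entries strictly positive. -/
def IsIrreducibleAperiodic {𝕏 : Type} [Fintype 𝕏] [DecidableEq 𝕏] (P : 𝕏 → 𝕏 → ℝ) : Prop :=
  ∃ m : ℕ, 0 < m ∧ ∀ x y, 0 < matPow P m x y

/-- `π` is a stationary distribution of `P`. -/
def IsStationaryDist {𝕏 : Type} [Fintype 𝕏] (P : 𝕏 → 𝕏 → ℝ) (π : 𝕏 → ℝ) : Prop :=
  ∀ y, ∑ x, π x * P x y = π y

/-- Law of the first `n` states of the Markov chain with initial distribution `π'`
and transition matrix `P`. -/
def markovLaw {𝕏 : Type} (π' : 𝕏 → ℝ) (P : 𝕏 → 𝕏 → ℝ) : ∀ n : ℕ, (Fin n → 𝕏) → ℝ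
  | 0, _ => 1
  | n + 1, x => π' (x 0) * ∏ i : Fin n, P (x i.castSucc) (x i.succ)

/-- Distribution of `X_{n+1}` when `X_1 ~ μ` (i.e. `μ Pⁿ`). -/
def stepDist {𝕏 : Type} [Fintype 𝕏] [DecidableEq 𝕏] (μ : 𝕏 → ℝ) (P : 𝕏 → 𝕏 → ℝ)
    (n : ℕ) : 𝕏 → ℝ :=
  fun y => ∑ x, μ x * matPow P n x y

/-- Law of `n` i.i.d. blocks, each distributed according to `q`. -/
def iidLaw {S : Type} [Fintype S] (q : S → ℝ) (n : ℕ) (x : Fin n → S) : ℝ := ∏ i, q (x i)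

/-- Additive block distortion built from the single-letter distortion `d`. -/
def blockDist {𝕏 𝕐 : Type} (d : 𝕏 → 𝕐 → ℝ) (T : ℕ) (s : Fin T → 𝕏) (t : Fin T → 𝕐) : ℝ :=
  ∑ j, d (s j) (t j)

/-- Marginal of the distribution `q` on `𝕏^T` on the last `T - τ` coordinates
(the projection `J_τ`). -/
noncomputable def projDist {𝕏 : Type} [Fintype 𝕏] [DecidableEq 𝕏] {T : ℕ}
    (q : (Fin T → 𝕏) → ℝ) (τ : ℕ) : (Fin (T - τ) → 𝕏) → ℝ :=
  fun r => ∑ s : Fin T → 𝕏,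
    if (∀ i : Fin (T - τ), s ⟨τ + i.val, by have := i.isLt; omega⟩ = r i) then q s else 0

/-- Maximal value of the single-letter distortion measure. -/
noncomputable def Dmax {𝕏 𝕐 : Type} [Fintype 𝕏] [Fintype 𝕐] (d : 𝕏 → 𝕐 → ℝ) : ℝ :=
  ⨆ p : 𝕏 × 𝕐, d p.1 p.2

/-- Minimal strictly positive value of the single-letter distortion measure. -/
noncomputable def Dmin {𝕏 𝕐 : Type} [Fintype 𝕏] [Fintype 𝕐] (d : 𝕏 → 𝕐 → ℝ) : ℝ :=
  ⨅ p : {p : 𝕏 × 𝕐 // 0 < d p.1 p.2}, d p.1.1 p.1.2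

/-- Operational rate-distortion function under the expected distortion criterion, for the
source whose first `n` letters have law `law n` and with single-letter distortion `ρ`:
the infimum of all rates `R` for which there is a sequence of rate-`R` codes
`⟨eⁿ, fⁿ⟩` (with codebook size `2^⌊nR⌋`) whose expected normalized `n`-letter distortion
has `limsup` at most `D`. -/
noncomputable def RDE {S T : Type} [Fintype S]
    (law : ∀ n : ℕ, (Fin n → S) → ℝ) (ρ : S → T → ℝ) (D : ℝ) : ℝ :=
  sInf {R : ℝ |
    ∃ enc : ∀ n : ℕ, (Fin n → S) → Fin (2 ^ ⌊(n : ℝ) * R⌋₊),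
    ∃ dec : ∀ n : ℕ, Fin (2 ^ ⌊(n : ℝ) * R⌋₊) → (Fin n → T),
      Filter.limsup (fun n : ℕ =>
        ∑ x : Fin n → S, law n x * ((n : ℝ)⁻¹ *
          ∑ i, ρ (x i) (dec n (enc n x) i))) Filter.atTop ≤ D}

/-- Operational rate-distortion function of the Markov source `X_{[π',P]}`. -/
noncomputable def markovRDE {𝕏 : Type} [Fintype 𝕏]
    (π' : 𝕏 → ℝ) (P : 𝕏 → 𝕏 → ℝ) (d : 𝕏 → 𝕏 → ℝ) (D : ℝ) : ℝ :=
  RDE (markovLaw π' P) d D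

/-- Operational rate-distortion function of the block-independent approximation
(BIA) `X^T_{[π',P]}` source. -/
noncomputable def biaRDE {𝕏 : Type} [Fintype 𝕏]
    (π' : 𝕏 → ℝ) (P : 𝕏 → 𝕏 → ℝ) (d : 𝕏 → 𝕏 → ℝ) (T : ℕ) (Δ : ℝ) : ℝ :=
  RDE (iidLaw (markovLaw π' P T)) (blockDist d T) Δ

/-- Operational rate-distortion function of the vector i.i.d. `J_τ(X^T_{[π',P]})` source. -/
noncomputable def projRDE {𝕏 : Type} [Fintype 𝕏] [DecidableEq 𝕏]
    (π' : 𝕏 → ℝ) (P : 𝕏 → 𝕏 → ℝ) (d : 𝕏 → 𝕏 → ℝ) (T τ : ℕ) (Δ : ℝ) : ℝ :=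
  RDE (iidLaw (projDist (markovLaw π' P T) τ)) (blockDist d (T - τ)) Δ

/-- `δ^{(τ)}`: the `l¹` distance between the distribution of `X_{τ+1}` under `X_{[π',P]}`
and the stationary distribution `π`. -/
def l1dev {𝕏 : Type} [Fintype 𝕏] [DecidableEq 𝕏]
    (π' : 𝕏 → ℝ) (P : 𝕏 → 𝕏 → ℝ) (π : 𝕏 → ℝ) (τ : ℕ) : ℝ :=
  ∑ x, |stepDist π' P τ x - π x|

/-!
A code for the chain started in `μ` serves the chain started in `ν` at the same rate: on a block
of length `n`, keep the last `n - τ` letters, replace the first `τ` by the prefix that minimizes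
the distortion the code achieves on that tail, and encode the result. The prefix costs at most
`τ · Dmax d`, and the tail of `X_{[ν,P]}` is the chain started in `νPᵗ`, whose law is within
`‖νPᵗ - μPᵗ‖₁` of the tail law of `X_{[μ,P]}`; this distance tends to `0` by Doeblin's
contraction for the positive power of `P`. With `τ = √n` both errors vanish per letter, so the
two sources have the same achievable rates.
-/

open Topology
open scoped Matrix

section TransitionMatrix

variable {𝕏 : Type} [Fintype 𝕏] [DecidableEq 𝕏] {P : 𝕏 → 𝕏 → ℝ}

theorem matPow_eq_pow (P : 𝕏 → 𝕏 → ℝ) (n : ℕ) : matPow P n = Matrix.of P ^ n := by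
  induction n with
  | zero => ext x y; simp [matPow, Matrix.one_apply]
  | succ n ih => ext x y; simp [matPow, pow_succ, Matrix.mul_apply, ih]

theorem stepDist_eq_vecMul (μ : 𝕏 → ℝ) (P : 𝕏 → 𝕏 → ℝ) (n : ℕ) :
    stepDist μ P n = Matrix.vecMul μ (Matrix.of P ^ n) := by
  ext y
  simp [stepDist, matPow_eq_pow, Matrix.vecMul, dotProduct]

theorem stepDist_zero (μ : 𝕏 → ℝ) (P : 𝕏 → 𝕏 → ℝ) : stepDist μ P 0 = μ := by
  simp [stepDist_eq_vecMul]

theorem stepDist_one (μ : 𝕏 → ℝ) (P : 𝕏 → 𝕏 → ℝ) (y : 𝕏) :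
    stepDist μ P 1 y = ∑ x, μ x * P x y := by
  simp [stepDist_eq_vecMul, Matrix.vecMul, dotProduct]

theorem stepDist_add (μ : 𝕏 → ℝ) (P : 𝕏 → 𝕏 → ℝ) (s t : ℕ) :
    stepDist μ P (s + t) = stepDist (stepDist μ P s) P t := by
  simp [stepDist_eq_vecMul, pow_add, Matrix.vecMul_vecMul]

theorem IsStochastic.pow_mulVec_one (hP : IsStochastic P) (n : ℕ) :
    (Matrix.of P ^ n) *ᵥ 1 = 1 := by
  induction n with
  | zero => simp
  | succ n ih =>
    have hrow : Matrix.of P *ᵥ 1 = 1 := by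
      ext x
      simpa [Matrix.mulVec, dotProduct] using hP.2 x
    rw [pow_succ, ← Matrix.mulVec_mulVec, hrow, ih]

theorem IsStochastic.sum_matPow (hP : IsStochastic P) (n : ℕ) (x : 𝕏) :
    ∑ y, matPow P n x y = 1 := by
  simpa [Matrix.mulVec, dotProduct, matPow_eq_pow] using congrFun (hP.pow_mulVec_one n) x

theorem IsStochastic.sum_stepDist (hP : IsStochastic P) (μ : 𝕏 → ℝ) (n : ℕ) :
    ∑ y, stepDist μ P n y = ∑ x, μ x := by
  calc ∑ y, stepDist μ P n y = stepDist μ P n ⬝ᵥ 1 := by simp [dotProduct]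
    _ = μ ⬝ᵥ ((Matrix.of P ^ n) *ᵥ 1) := by rw [Matrix.dotProduct_mulVec, stepDist_eq_vecMul]
    _ = ∑ x, μ x := by simp [hP.pow_mulVec_one, dotProduct]

end TransitionMatrix

theorem sum_abs_vecMul_sub_le {ι κ : Type*} [Fintype ι] [Fintype κ] (Q : Matrix ι κ ℝ)
    (hQ : ∀ i, ∑ j, Q i j = 1) {c : ℝ} (hc : ∀ i j, c ≤ Q i j) {α β : ι → ℝ}
    (hαβ : ∑ i, α i = ∑ i, β i) :
    ∑ j, |Matrix.vecMul α Q j - Matrix.vecMul β Q j|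
      ≤ (1 - Fintype.card κ * c) * ∑ i, |α i - β i| := by
  -- subtracting `c` from every entry does not change `αQ - βQ`, and leaves a nonnegative matrix
  have hshift : ∀ j, Matrix.vecMul α Q j - Matrix.vecMul β Q j
      = ∑ i, (α i - β i) * (Q i j - c) := by
    intro j
    have hc0 : ∑ i, α i * c = ∑ i, β i * c := by rw [← Finset.sum_mul, ← Finset.sum_mul, hαβ]
    simp only [Matrix.vecMul, dotProduct, mul_sub, sub_mul, Finset.sum_sub_distrib, hc0,
      sub_self, sub_zero]
  calc ∑ j, |Matrix.vecMul α Q j - Matrix.vecMul β Q j|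
      ≤ ∑ j, ∑ i, |α i - β i| * (Q i j - c) := by
        refine Finset.sum_le_sum fun j _ => ?_
        rw [hshift]
        refine (Finset.abs_sum_le_sum_abs _ _).trans_eq (Finset.sum_congr rfl fun i _ => ?_)
        rw [abs_mul, abs_of_nonneg (sub_nonneg.2 (hc i j))]
    _ = (1 - Fintype.card κ * c) * ∑ i, |α i - β i| := by
        rw [Finset.sum_comm, Finset.mul_sum]
        refine Finset.sum_congr rfl fun i _ => ?_
        rw [← Finset.mul_sum, Finset.sum_sub_distrib, hQ, Finset.sum_const, Finset.card_univ,
          nsmul_eq_mul, mul_comm]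

section Mixing

variable {𝕏 : Type} [Fintype 𝕏] [DecidableEq 𝕏] {P : 𝕏 → 𝕏 → ℝ}

theorem IsStochastic.sum_abs_stepDist_add_sub_le (hP : IsStochastic P) {μ ν : 𝕏 → ℝ}
    (hμν : ∑ x, μ x = ∑ x, ν x) (t s : ℕ) {c : ℝ} (hc : ∀ x y, c ≤ matPow P s x y) :
    ∑ y, |stepDist μ P (t + s) y - stepDist ν P (t + s) y|
      ≤ (1 - Fintype.card 𝕏 * c) * ∑ y, |stepDist μ P t y - stepDist ν P t y| := by
  rw [stepDist_add, stepDist_add, stepDist_eq_vecMul _ _ s, stepDist_eq_vecMul _ _ s]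
  rw [matPow_eq_pow] at hc
  refine sum_abs_vecMul_sub_le _ (fun x => ?_) hc (by rw [hP.sum_stepDist, hP.sum_stepDist, hμν])
  simpa [matPow_eq_pow] using hP.sum_matPow s x

theorem tendsto_sum_abs_stepDist_sub [Nonempty 𝕏] (hP : IsStochastic P)
    (hPia : IsIrreducibleAperiodic P) {μ ν : 𝕏 → ℝ} (hμν : ∑ x, μ x = ∑ x, ν x) :
    Tendsto (fun t => ∑ y, |stepDist μ P t y - stepDist ν P t y|) atTop (𝓝 0) := by
  set Δ : ℕ → ℝ := fun t => ∑ y, |stepDist μ P t y - stepDist ν P t y|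
  have hΔ0 : ∀ t, 0 ≤ Δ t := fun t => Finset.sum_nonneg fun y _ => abs_nonneg _
  have hanti : Antitone Δ := antitone_nat_of_succ_le fun t => by
    simpa using hP.sum_abs_stepDist_add_sub_le hμν t 1 (c := 0) (by simpa [matPow] using hP.1)
  obtain ⟨m, -, hpos⟩ := hPia
  obtain ⟨p, hp⟩ := Finite.exists_min fun p : 𝕏 × 𝕏 => matPow P m p.1 p.2
  set c := matPow P m p.1 p.2
  have hc : ∀ x y, c ≤ matPow P m x y := fun x y => hp (x, y)
  set r := 1 - Fintype.card 𝕏 * c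
  have hr0 : 0 ≤ r := by
    have := Finset.sum_le_sum fun y (_ : y ∈ Finset.univ) => hc (Classical.arbitrary 𝕏) y
    rw [hP.sum_matPow, Finset.sum_const, Finset.card_univ, nsmul_eq_mul] at this
    exact sub_nonneg.2 this
  have hr1 : r < 1 := by
    have : (0 : ℝ) < Fintype.card 𝕏 := Nat.cast_pos.2 Fintype.card_pos
    have := mul_pos this (hpos p.1 p.2)
    linarith
  have hgeom : ∀ k, Δ (k * m) ≤ r ^ k * Δ 0 := by
    intro k
    induction k with
    | zero => simp
    | succ k ih =>
      calc Δ ((k + 1) * m) ≤ r * Δ (k * m) := by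
            rw [add_mul, one_mul]; exact hP.sum_abs_stepDist_add_sub_le hμν _ m hc
        _ ≤ r ^ (k + 1) * Δ 0 := by rw [pow_succ', mul_assoc]; gcongr
  refine tendsto_order.2 ⟨fun a ha => Eventually.of_forall fun t => ha.trans_le (hΔ0 t),
    fun a ha => ?_⟩
  obtain ⟨k, hk⟩ := (((tendsto_pow_atTop_nhds_zero_of_lt_one hr0 hr1).mul_const (Δ 0)).eventually
    (gt_mem_nhds (by simpa using ha))).exists
  filter_upwards [eventually_ge_atTop (k * m)] with t ht
  exact ((hanti ht).trans (hgeom k)).trans_lt hk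

end Mixing

theorem Fintype.sum_fun_fin_succ {α β : Type*} [Fintype α] [AddCommMonoid β] {n : ℕ}
    (f : (Fin (n + 1) → α) → β) :
    ∑ x, f x = ∑ a, ∑ y, f (Fin.cons a y) := by
  rw [← (Fin.consEquiv fun _ => α).sum_comp, Fintype.sum_prod_type]
  rfl

theorem IsProbDist.nonempty {𝕏 : Type} [Fintype 𝕏] {μ : 𝕏 → ℝ} (hμ : IsProbDist μ) :
    Nonempty 𝕏 := by
  by_contra h
  simpa [not_nonempty_iff.1 h] using hμ.2

theorem markovLaw_cons {𝕏 : Type} (ν : 𝕏 → ℝ) (P : 𝕏 → 𝕏 → ℝ) {n : ℕ} (a : 𝕏) (y : Fin n → 𝕏) :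
    markovLaw ν P (n + 1) (Fin.cons a y) = ν a * markovLaw (P a) P n y := by
  cases n with
  | zero => simp [markovLaw]
  | succ n => simp [markovLaw, Fin.prod_univ_succ]

section MarkovLaw

variable {𝕏 : Type} [Fintype 𝕏] {P : 𝕏 → 𝕏 → ℝ}

theorem markovLaw_nonneg (hP : IsStochastic P) {ν : 𝕏 → ℝ} (hν : ∀ x, 0 ≤ ν x) {n : ℕ}
    (x : Fin n → 𝕏) : 0 ≤ markovLaw ν P n x := by
  cases n with
  | zero => simp [markovLaw]
  | succ n => exact mul_nonneg (hν _) (Finset.prod_nonneg fun i _ => hP.1 _ _)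

theorem IsStochastic.sum_markovLaw (hP : IsStochastic P) {ν : 𝕏 → ℝ} (hν : ∑ x, ν x = 1)
    (n : ℕ) : ∑ x, markovLaw ν P n x = 1 := by
  induction n generalizing ν with
  | zero => simp [markovLaw]
  | succ n ih =>
    simp_rw [Fintype.sum_fun_fin_succ, markovLaw_cons, ← Finset.mul_sum, ih (hP.2 _), mul_one, hν]

theorem IsStochastic.sum_abs_markovLaw_sub_le (hP : IsStochastic P) (α β : 𝕏 → ℝ) (n : ℕ) :
    ∑ x, |markovLaw α P n x - markovLaw β P n x| ≤ ∑ a, |α a - β a| := by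
  cases n with
  | zero => simpa [markovLaw] using Finset.sum_nonneg fun a _ => abs_nonneg (α a - β a)
  | succ n =>
    refine le_of_eq ?_
    simp_rw [Fintype.sum_fun_fin_succ, markovLaw_cons, ← sub_mul, abs_mul,
      abs_of_nonneg (markovLaw_nonneg hP (hP.1 _) _), ← Finset.mul_sum, hP.sum_markovLaw (hP.2 _),
      mul_one]

variable [DecidableEq 𝕏]

theorem sum_markovLaw_cons {ν : 𝕏 → ℝ} (hν : ∑ x, ν x = 1) {n : ℕ} (y : Fin n → 𝕏) :
    ∑ a, markovLaw ν P (n + 1) (Fin.cons a y) = markovLaw (stepDist ν P 1) P n y := by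
  cases n with
  | zero => simpa [markovLaw] using hν
  | succ n => simp [markovLaw, Fin.prod_univ_succ, stepDist_one, Finset.sum_mul, mul_assoc]

theorem IsStochastic.sum_markovLaw_mul_tail (hP : IsStochastic P) {ν : 𝕏 → ℝ}
    (hν : ∑ x, ν x = 1) (τ : ℕ) {m n : ℕ} (hn : τ + m = n) (h : (Fin m → 𝕏) → ℝ) :
    ∑ x : Fin n → 𝕏, markovLaw ν P n x * h (fun i => x (Fin.cast hn (Fin.natAdd τ i)))
      = ∑ z, markovLaw (stepDist ν P τ) P m z * h z := by
  induction τ generalizing ν n with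
  | zero =>
    obtain rfl : m = n := by simpa using hn
    simp [stepDist_zero]
  | succ τ ih =>
    obtain rfl : n = τ + m + 1 := hn.symm.trans (by omega)
    have htail : ∀ (a : 𝕏) (y : Fin (τ + m) → 𝕏),
        (fun i => (Fin.cons a y : Fin (τ + m + 1) → 𝕏) (Fin.cast hn (Fin.natAdd (τ + 1) i)))
          = fun i => y (Fin.natAdd τ i) := by
      intro a y
      ext i
      rw [show Fin.cast hn (Fin.natAdd (τ + 1) i) = (Fin.natAdd τ i).succ by ext; simp; omega,
        Fin.cons_succ]
    simp_rw [Fintype.sum_fun_fin_succ, htail]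
    rw [Finset.sum_comm]
    simp_rw [← Finset.sum_mul, sum_markovLaw_cons hν]
    rw [← add_comm 1 τ, stepDist_add]
    exact ih (by rw [hP.sum_stepDist, hν]) rfl

theorem sum_mul_le_sum_mul_add_sum_abs_sub_mul {ι : Type*} [Fintype ι] (p q f : ι → ℝ) {B : ℝ}
    (hf : ∀ i, |f i| ≤ B) :
    ∑ i, p i * f i ≤ ∑ i, q i * f i + (∑ i, |p i - q i|) * B := by
  rw [← sub_le_iff_le_add', ← Finset.sum_sub_distrib, Finset.sum_mul]
  refine Finset.sum_le_sum fun i _ => ?_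
  rw [← sub_mul]
  calc (p i - q i) * f i ≤ |(p i - q i) * f i| := le_abs_self _
    _ ≤ |p i - q i| * B := by rw [abs_mul]; exact mul_le_mul_of_nonneg_left (hf i) (abs_nonneg _)

section Coding

variable {𝕏 : Type} {τ m : ℕ} {d : 𝕏 → 𝕏 → ℝ} {M : ℝ}

def tailDistortion (d : 𝕏 → 𝕏 → ℝ) (Y : (Fin (τ + m) → 𝕏) → Fin (τ + m) → 𝕏)
    (w : Fin τ → 𝕏) (z : Fin m → 𝕏) : ℝ :=
  ∑ i, d (z i) (Y (Fin.append w z) (Fin.natAdd τ i))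

theorem abs_tailDistortion_le (hd0 : ∀ x y, 0 ≤ d x y) (hdM : ∀ x y, d x y ≤ M)
    (Y : (Fin (τ + m) → 𝕏) → Fin (τ + m) → 𝕏) (w : Fin τ → 𝕏) (z : Fin m → 𝕏) :
    |tailDistortion d Y w z| ≤ m * M := by
  rw [tailDistortion, abs_of_nonneg (Finset.sum_nonneg fun i _ => hd0 _ _)]
  exact (Finset.sum_le_sum fun i _ => hdM _ _).trans_eq (by simp)

variable [Finite 𝕏] [Nonempty 𝕏]

noncomputable def bestPrefix (d : 𝕏 → 𝕏 → ℝ) (Y : (Fin (τ + m) → 𝕏) → Fin (τ + m) → 𝕏)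
    (z : Fin m → 𝕏) : Fin τ → 𝕏 :=
  (Finite.exists_min fun w => tailDistortion d Y w z).choose

theorem tailDistortion_bestPrefix_le (Y : (Fin (τ + m) → 𝕏) → Fin (τ + m) → 𝕏)
    (w : Fin τ → 𝕏) (z : Fin m → 𝕏) :
    tailDistortion d Y (bestPrefix d Y z) z ≤ tailDistortion d Y w z :=
  (Finite.exists_min fun w => tailDistortion d Y w z).choose_spec w

noncomputable def withBestPrefix (d : 𝕏 → 𝕏 → ℝ) (Y : (Fin (τ + m) → 𝕏) → Fin (τ + m) → 𝕏)
    (x : Fin (τ + m) → 𝕏) : Fin (τ + m) → 𝕏 :=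
  Fin.append (bestPrefix d Y fun i => x (Fin.natAdd τ i)) fun i => x (Fin.natAdd τ i)

theorem blockDist_withBestPrefix_le (hdM : ∀ x y, d x y ≤ M)
    (Y : (Fin (τ + m) → 𝕏) → Fin (τ + m) → 𝕏) (x : Fin (τ + m) → 𝕏) :
    blockDist d (τ + m) x (Y (withBestPrefix d Y x))
      ≤ τ * M + tailDistortion d Y (bestPrefix d Y fun i => x (Fin.natAdd τ i))
          fun i => x (Fin.natAdd τ i) := by
  rw [blockDist, Fin.sum_univ_add]
  exact add_le_add ((Finset.sum_le_sum fun i _ => hdM _ _).trans_eq (by simp)) le_rfl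

theorem tailDistortion_bestPrefix_le_blockDist (hd0 : ∀ x y, 0 ≤ d x y)
    (Y : (Fin (τ + m) → 𝕏) → Fin (τ + m) → 𝕏) (x : Fin (τ + m) → 𝕏) :
    tailDistortion d Y (bestPrefix d Y fun i => x (Fin.natAdd τ i)) (fun i => x (Fin.natAdd τ i))
      ≤ blockDist d (τ + m) x (Y x) := by
  refine (tailDistortion_bestPrefix_le Y (fun i => x (Fin.castAdd m i)) _).trans ?_
  rw [tailDistortion, Fin.append_castAdd_natAdd, blockDist, Fin.sum_univ_add]
  exact le_add_of_nonneg_left (Finset.sum_nonneg fun i _ => hd0 _ _)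

end Coding

section Transfer

variable {𝕏 : Type} [Fintype 𝕏] [DecidableEq 𝕏] [Nonempty 𝕏] {P : 𝕏 → 𝕏 → ℝ}
  {d : 𝕏 → 𝕏 → ℝ} {M : ℝ} {μ ν : 𝕏 → ℝ}

theorem sum_markovLaw_mul_blockDist_withBestPrefix_le (hP : IsStochastic P) (hμ : IsProbDist μ)
    (hν : IsProbDist ν) (hd0 : ∀ x y, 0 ≤ d x y) (hdM : ∀ x y, d x y ≤ M) {τ m : ℕ}
    (Y : (Fin (τ + m) → 𝕏) → Fin (τ + m) → 𝕏) :
    ∑ x, markovLaw ν P (τ + m) x * blockDist d (τ + m) x (Y (withBestPrefix d Y x))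
      ≤ ∑ x, markovLaw μ P (τ + m) x * blockDist d (τ + m) x (Y x)
        + (τ + m * ∑ y, |stepDist ν P τ y - stepDist μ P τ y|) * M := by
  set G : (Fin m → 𝕏) → ℝ := fun z => tailDistortion d Y (bestPrefix d Y z) z
  have hM : 0 ≤ M := (hd0 _ _).trans (hdM (Classical.arbitrary 𝕏) (Classical.arbitrary 𝕏))
  have hmarg : ∀ γ : 𝕏 → ℝ, IsProbDist γ →
      ∑ x, markovLaw γ P (τ + m) x * G (fun i => x (Fin.natAdd τ i))
        = ∑ z, markovLaw (stepDist γ P τ) P m z * G z :=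
    fun γ hγ => hP.sum_markovLaw_mul_tail hγ.2 τ rfl G
  calc ∑ x, markovLaw ν P (τ + m) x * blockDist d (τ + m) x (Y (withBestPrefix d Y x))
      ≤ ∑ x, markovLaw ν P (τ + m) x * (τ * M + G (fun i => x (Fin.natAdd τ i))) :=
        Finset.sum_le_sum fun x _ => mul_le_mul_of_nonneg_left
          (blockDist_withBestPrefix_le hdM Y x) (markovLaw_nonneg hP hν.1 x)
    _ = τ * M + ∑ z, markovLaw (stepDist ν P τ) P m z * G z := by
        simp_rw [mul_add, Finset.sum_add_distrib, ← Finset.sum_mul, hP.sum_markovLaw hν.2,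
          one_mul, hmarg ν hν]
    _ ≤ τ * M + (∑ z, markovLaw (stepDist μ P τ) P m z * G z
          + (∑ y, |stepDist ν P τ y - stepDist μ P τ y|) * (m * M)) := by
        gcongr
        refine (sum_mul_le_sum_mul_add_sum_abs_sub_mul _ (markovLaw (stepDist μ P τ) P m) G
          fun z => abs_tailDistortion_le hd0 hdM Y _ z).trans ?_
        gcongr
        exact hP.sum_abs_markovLaw_sub_le _ _ m
    _ ≤ τ * M + (∑ x, markovLaw μ P (τ + m) x * blockDist d (τ + m) x (Y x)
          + (∑ y, |stepDist ν P τ y - stepDist μ P τ y|) * (m * M)) := by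
        rw [← hmarg μ hμ]
        gcongr with x
        · exact markovLaw_nonneg hP hμ.1 x
        · exact tailDistortion_bestPrefix_le_blockDist hd0 Y x
    _ = _ := by ring

end Transfer

section Achievability

variable {S T : Type} [Fintype S]

noncomputable def avgDistortion {n : ℕ} (law : (Fin n → S) → ℝ) (ρ : S → T → ℝ)
    (Y : (Fin n → S) → Fin n → T) : ℝ :=
  ∑ x, law x * ((n : ℝ)⁻¹ * blockDist ρ n x (Y x))

def IsAchievable (law : ∀ n : ℕ, (Fin n → S) → ℝ) (ρ : S → T → ℝ) (D R : ℝ) : Prop :=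
  ∃ enc : ∀ n : ℕ, (Fin n → S) → Fin (2 ^ ⌊(n : ℝ) * R⌋₊),
  ∃ dec : ∀ n : ℕ, Fin (2 ^ ⌊(n : ℝ) * R⌋₊) → (Fin n → T),
    limsup (fun n => avgDistortion (law n) ρ fun x => dec n (enc n x)) atTop ≤ D

theorem RDE_eq_sInf_isAchievable (law : ∀ n : ℕ, (Fin n → S) → ℝ) (ρ : S → T → ℝ) (D : ℝ) :
    RDE law ρ D = sInf {R | IsAchievable law ρ D R} := rfl

theorem avgDistortion_eq_inv_mul {n : ℕ} (law : (Fin n → S) → ℝ) (ρ : S → T → ℝ)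
    (Y : (Fin n → S) → Fin n → T) :
    avgDistortion law ρ Y = (n : ℝ)⁻¹ * ∑ x, law x * blockDist ρ n x (Y x) := by
  simp_rw [avgDistortion, Finset.mul_sum, mul_left_comm]

theorem avgDistortion_nonneg {n : ℕ} {law : (Fin n → S) → ℝ} {ρ : S → T → ℝ}
    (hlaw : ∀ x, 0 ≤ law x) (hρ : ∀ s t, 0 ≤ ρ s t) (Y : (Fin n → S) → Fin n → T) :
    0 ≤ avgDistortion law ρ Y :=
  Finset.sum_nonneg fun x _ => mul_nonneg (hlaw x)
    (mul_nonneg (by positivity) (Finset.sum_nonneg fun i _ => hρ _ _))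

theorem avgDistortion_le {n : ℕ} {law : (Fin n → S) → ℝ} {ρ : S → T → ℝ} {M : ℝ}
    (hlaw : ∀ x, 0 ≤ law x) (hlaw1 : ∑ x, law x = 1) (hρM : ∀ s t, ρ s t ≤ M) (hM : 0 ≤ M)
    (Y : (Fin n → S) → Fin n → T) : avgDistortion law ρ Y ≤ M := by
  have hblock : ∀ x, (n : ℝ)⁻¹ * blockDist ρ n x (Y x) ≤ M := by
    intro x
    rcases Nat.eq_zero_or_pos n with rfl | hn
    · simpa using hM
    · rw [inv_mul_le_iff₀ (by exact_mod_cast hn)]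
      exact (Finset.sum_le_sum fun i _ => hρM _ _).trans_eq (by simp)
  calc avgDistortion law ρ Y ≤ ∑ x, law x * M :=
        Finset.sum_le_sum fun x _ => mul_le_mul_of_nonneg_left (hblock x) (hlaw x)
    _ = M := by rw [← Finset.sum_mul, hlaw1, one_mul]

end Achievability

theorem exists_avgDistortion_markovLaw_comp_le {𝕏 : Type} [Fintype 𝕏] [DecidableEq 𝕏]
    [Nonempty 𝕏] {P d : 𝕏 → 𝕏 → ℝ} {M : ℝ} {μ ν : 𝕏 → ℝ} (hP : IsStochastic P)
    (hμ : IsProbDist μ) (hν : IsProbDist ν) (hd0 : ∀ x y, 0 ≤ d x y) (hdM : ∀ x y, d x y ≤ M)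
    {τ n : ℕ} (hτ : τ ≤ n) (Y : (Fin n → 𝕏) → Fin n → 𝕏) :
    ∃ φ : (Fin n → 𝕏) → Fin n → 𝕏, avgDistortion (markovLaw ν P n) d (Y ∘ φ)
      ≤ avgDistortion (markovLaw μ P n) d Y
        + (τ / n + ∑ y, |stepDist ν P τ y - stepDist μ P τ y|) * M := by
  obtain ⟨m, rfl⟩ := Nat.exists_eq_add_of_le hτ
  refine ⟨withBestPrefix d Y, ?_⟩
  set Δ := ∑ y, |stepDist ν P τ y - stepDist μ P τ y|
  have hΔ : 0 ≤ Δ := Finset.sum_nonneg fun y _ => abs_nonneg _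
  have hM : 0 ≤ M := (hd0 _ _).trans (hdM (Classical.arbitrary 𝕏) (Classical.arbitrary 𝕏))
  have hcoef : ((τ + m : ℕ) : ℝ)⁻¹ * (τ + m * Δ) ≤ τ / (τ + m : ℕ) + Δ := by
    rw [inv_mul_eq_div, add_div]
    gcongr
    exact div_le_of_le_mul₀ (by positivity) hΔ (by push_cast; nlinarith)
  rw [avgDistortion_eq_inv_mul, avgDistortion_eq_inv_mul]
  calc ((τ + m : ℕ) : ℝ)⁻¹ * ∑ x, markovLaw ν P (τ + m) x
        * blockDist d (τ + m) x (Y (withBestPrefix d Y x))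
      ≤ ((τ + m : ℕ) : ℝ)⁻¹ * (∑ x, markovLaw μ P (τ + m) x * blockDist d (τ + m) x (Y x)
        + (τ + m * Δ) * M) := by
        gcongr
        exact sum_markovLaw_mul_blockDist_withBestPrefix_le hP hμ hν hd0 hdM Y
    _ ≤ _ := by
        rw [mul_add, ← mul_assoc]
        gcongr

theorem tendsto_nat_sqrt_atTop : Tendsto Nat.sqrt atTop atTop :=
  tendsto_atTop_atTop.2 fun b => ⟨b * b, fun _ hn => Nat.le_sqrt.2 hn⟩

theorem tendsto_nat_sqrt_div_self : Tendsto (fun n : ℕ => (Nat.sqrt n : ℝ) / n) atTop (𝓝 0) := by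
  have hinv : Tendsto (fun n : ℕ => (Nat.sqrt n : ℝ)⁻¹) atTop (𝓝 0) :=
    tendsto_inv_atTop_zero.comp (tendsto_natCast_atTop_atTop.comp tendsto_nat_sqrt_atTop)
  refine squeeze_zero' (Eventually.of_forall fun n => by positivity) ?_ hinv
  filter_upwards [eventually_ge_atTop 1] with n hn
  have hs : (0 : ℝ) < Nat.sqrt n := by exact_mod_cast Nat.sqrt_pos.2 hn
  rw [div_le_iff₀ (by exact_mod_cast hn), ← div_eq_inv_mul, le_div_iff₀ hs]
  exact_mod_cast Nat.sqrt_le n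

theorem limsup_le_limsup_of_le_add_of_tendsto_zero {ι : Type*} {l : Filter ι} [l.NeBot]
    {a b c : ι → ℝ} (hab : b ≤ᶠ[l] a + c) (hc : Tendsto c l (𝓝 0)) (ha : IsBoundedUnder (· ≤ ·) l a)
    (hb : IsBoundedUnder (· ≥ ·) l b) : limsup b l ≤ limsup a l := by
  refine le_of_forall_pos_le_add fun η hη => limsup_le_of_le hb.isCoboundedUnder_le ?_
  filter_upwards [hab, eventually_lt_of_limsup_lt (lt_add_of_pos_right _ (half_pos hη)) ha,
    hc.eventually (gt_mem_nhds (half_pos hη))] with n hn ha hc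
  linarith [hn, ha, hc, show (a + c) n = a n + c n from rfl]

theorem IsAchievable.markovLaw_of_markovLaw {𝕏 : Type} [Fintype 𝕏] [DecidableEq 𝕏]
    {P d : 𝕏 → 𝕏 → ℝ} {μ ν : 𝕏 → ℝ} {D R : ℝ} (hP : IsStochastic P)
    (hPia : IsIrreducibleAperiodic P) (hμ : IsProbDist μ) (hν : IsProbDist ν)
    (hd0 : ∀ x y, 0 ≤ d x y) (h : IsAchievable (markovLaw μ P) d D R) :
    IsAchievable (markovLaw ν P) d D R := by
  have := hμ.nonempty
  obtain ⟨enc, dec, hlim⟩ := h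
  have hdM : ∀ x y, d x y ≤ Dmax d := fun x y =>
    le_ciSup (f := fun p : 𝕏 × 𝕏 => d p.1 p.2) (Finite.bddAbove_range _) (x, y)
  have hM : 0 ≤ Dmax d := (hd0 _ _).trans (hdM (Classical.arbitrary 𝕏) (Classical.arbitrary 𝕏))
  choose φ hφ using fun n => exists_avgDistortion_markovLaw_comp_le hP hμ hν hd0 hdM
    (Nat.sqrt_le_self n) fun x => dec n (enc n x)
  have hmix : Tendsto (fun t => ∑ y, |stepDist ν P t y - stepDist μ P t y|) atTop (𝓝 0) :=
    tendsto_sum_abs_stepDist_sub hP hPia (by rw [hν.2, hμ.2])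
  have herr := (tendsto_nat_sqrt_div_self.add (hmix.comp tendsto_nat_sqrt_atTop)).mul_const
    (Dmax d)
  rw [zero_add, zero_mul] at herr
  refine ⟨fun n x => enc n (φ n x), dec, le_trans ?_ hlim⟩
  exact limsup_le_limsup_of_le_add_of_tendsto_zero (Eventually.of_forall hφ) herr
    (isBoundedUnder_of ⟨Dmax d, fun n => avgDistortion_le (markovLaw_nonneg hP hμ.1)
      (hP.sum_markovLaw hμ.2 n) hdM hM _⟩)
    (isBoundedUnder_of ⟨0, fun n => avgDistortion_nonneg (markovLaw_nonneg hP hν.1) hd0 _⟩)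

theorem markov_rd_initial_dist_independent_general
    {𝕏 : Type} [Fintype 𝕏] [DecidableEq 𝕏]
    (d : 𝕏 → 𝕏 → ℝ) (hdnn : ∀ x y, 0 ≤ d x y)
    (P : 𝕏 → 𝕏 → ℝ) (hP : IsStochastic P) (hPia : IsIrreducibleAperiodic P)
    (π : 𝕏 → ℝ) (hπ : IsProbDist π)
    (π' : 𝕏 → ℝ) (hπ' : IsProbDist π')
    (D : ℝ) :
    markovRDE π' P d D = markovRDE π P d D := by
  rw [markovRDE, markovRDE, RDE_eq_sInf_isAchievable, RDE_eq_sInf_isAchievable]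
  congr 1
  ext R
  exact ⟨.markovLaw_of_markovLaw hP hPia hπ' hπ hdnn, .markovLaw_of_markovLaw hP hPia hπ hπ' hdnn⟩

/-- **Theorem 1.** The operational rate-distortion function (expected distortion
criterion) of the Markov source `X_{[π',P]}` equals that of the source started in the
stationary distribution: `R^E_{X_{[π',P]}}(D) = R^E_{X_{[π,P]}}(D)`. -/
theorem markov_rd_initial_dist_independent
    {𝕏 : Type} [Fintype 𝕏] [DecidableEq 𝕏] (hcard : 2 ≤ Fintype.card 𝕏)
    (d : 𝕏 → 𝕏 → ℝ) (hdnn : ∀ x y, 0 ≤ d x y)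
    (hdiag : ∀ x, d x x = 0) (hdpos : ∀ x y, x ≠ y → 0 < d x y)
    (P : 𝕏 → 𝕏 → ℝ) (hP : IsStochastic P) (hPia : IsIrreducibleAperiodic P)
    (π : 𝕏 → ℝ) (hπ : IsProbDist π) (hπstat : IsStationaryDist P π)
    (π' : 𝕏 → ℝ) (hπ' : IsProbDist π')
    (D : ℝ) (hD : 0 < D) :
    markovRDE π' P d D = markovRDE π P d D :=
  markov_rd_initial_dist_independent_general d hdnn P hP hPia π hπ π' hπ' D
end MarkovLaw
end

section
/- For every probability distribution π' on 𝕏, every 0 < τ < T, and every D > 0, the operational rate-distortion functions satisfy R^E_{X^T_{[π',P]}}((T−τ)D + τ D_max) ≤ R^E_{J_τ(X^T_{[π',P]})}((T−τ)D). (Any code for the projected source can be used for the full BIA source by coding the first τ coordinates of each block arbitrarily, incurring at most τ D_max extra distortion per block.) -/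
open Filter Finset

/-!
A code for the projected source `J_τ(X^T)` serves the BIA source `X^T`: encode the last
`T - τ` letters of each block with it and fill the first `τ` reconstruction letters with a fixed
symbol, which costs at most `τ D_max` per block. So every rate achievable for `J_τ(X^T)` at
level `(T - τ) D` is achievable for `X^T` at level `(T - τ) D + τ D_max`, and the infima compare.

Since `sInf` on `ℝ` is `0` on empty and on unbounded sets, two facts are needed besides: the rates
achievable for `J_τ(X^T)` form a nonempty set (lossless coding), and an operational
rate-distortion function is never negative, because with a nonpositive rate there is a single
codeword and then every rate is achievable.
-/

section RateDistortion

variable {S T : Type} [Fintype S]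

noncomputable def expectedDistortion {n : ℕ} (law : (Fin n → S) → ℝ) (ρ : S → T → ℝ)
    (code : (Fin n → S) → Fin n → T) : ℝ :=
  ∑ x, law x * ((n : ℝ)⁻¹ * ∑ i, ρ (x i) (code x i))

def achievableRates (law : ∀ n : ℕ, (Fin n → S) → ℝ) (ρ : S → T → ℝ) (D : ℝ) : Set ℝ :=
  {R : ℝ |
    ∃ enc : ∀ n : ℕ, (Fin n → S) → Fin (2 ^ ⌊(n : ℝ) * R⌋₊),
    ∃ dec : ∀ n : ℕ, Fin (2 ^ ⌊(n : ℝ) * R⌋₊) → (Fin n → T),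
      limsup (fun n => expectedDistortion (law n) ρ (fun x => dec n (enc n x))) atTop ≤ D}

theorem RDE_eq_sInf_achievableRates (law : ∀ n : ℕ, (Fin n → S) → ℝ) (ρ : S → T → ℝ)
    (D : ℝ) : RDE law ρ D = sInf (achievableRates law ρ D) :=
  rfl

variable {law : ∀ n : ℕ, (Fin n → S) → ℝ} {ρ : S → T → ℝ} {D : ℝ}

theorem mem_achievableRates_of_floor_le {R R' : ℝ} (hR : R ∈ achievableRates law ρ D)
    (h : ∀ n : ℕ, ⌊(n : ℝ) * R⌋₊ ≤ ⌊(n : ℝ) * R'⌋₊) : R' ∈ achievableRates law ρ D := by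
  obtain ⟨enc, dec, hD⟩ := hR
  refine ⟨fun n x => Fin.castLE (Nat.pow_le_pow_right two_pos (h n)) (enc n x),
    fun n k => dec n ⟨k % 2 ^ ⌊(n : ℝ) * R⌋₊, Nat.mod_lt _ (by positivity)⟩, ?_⟩
  simpa only [Fin.val_castLE, Nat.mod_eq_of_lt (Fin.isLt _)] using hD

theorem achievableRates_eq_univ_of_nonpos {R : ℝ} (hR : R ∈ achievableRates law ρ D)
    (hR0 : R ≤ 0) : achievableRates law ρ D = Set.univ := by
  refine Set.eq_univ_of_forall fun R' => mem_achievableRates_of_floor_le hR fun n => ?_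
  rw [Nat.floor_of_nonpos (mul_nonpos_of_nonneg_of_nonpos n.cast_nonneg hR0)]
  exact Nat.zero_le _

theorem RDE_nonneg : 0 ≤ RDE law ρ D := by
  by_cases h : ∀ R ∈ achievableRates law ρ D, 0 ≤ R
  · exact Real.sInf_nonneg h
  · push Not at h
    obtain ⟨R, hR, hR0⟩ := h
    rw [RDE_eq_sInf_achievableRates, achievableRates_eq_univ_of_nonpos hR hR0.le,
      Real.sInf_of_not_bddBelow not_bddBelow_univ]

theorem RDE_le_RDE {S' T' : Type} [Fintype S'] {law' : ∀ n : ℕ, (Fin n → S') → ℝ}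
    {ρ' : S' → T' → ℝ} {D' : ℝ}
    (hsub : achievableRates law' ρ' D' ⊆ achievableRates law ρ D)
    (hne : (achievableRates law' ρ' D').Nonempty) : RDE law ρ D ≤ RDE law' ρ' D' := by
  by_cases hbdd : BddBelow (achievableRates law ρ D)
  · exact csInf_le_csInf hbdd hne hsub
  · rw [RDE_eq_sInf_achievableRates, Real.sInf_of_not_bddBelow hbdd]
    exact RDE_nonneg

/-- Lossless coding at rate `|S|`: `|S|ⁿ ≤ 2^(n |S|)` codewords suffice to encode `Sⁿ`. -/
theorem achievableRates_nonempty [Nonempty S] {law : ∀ n : ℕ, (Fin n → S) → ℝ}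
    {ρ : S → S → ℝ} (hρ : ∀ s, ρ s s = 0) (hD : 0 ≤ D) :
    (achievableRates law ρ D).Nonempty := by
  have hcard (n : ℕ) : Fintype.card (Fin n → S) ≤
      Fintype.card (Fin (2 ^ ⌊(n : ℝ) * (Fintype.card S : ℝ)⌋₊)) := by
    rw [← Nat.cast_mul, Nat.floor_natCast, Fintype.card_fin, Fintype.card_fun,
      Fintype.card_fin, mul_comm, pow_mul]
    exact Nat.pow_le_pow_left Nat.lt_two_pow_self.le n
  let e n := (Function.Embedding.nonempty_iff_card_le.2 (hcard n)).some
  refine ⟨Fintype.card S, fun n => e n, fun n => Function.invFun (e n), ?_⟩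
  have hlossless (n : ℕ) (x : Fin n → S) : Function.invFun (e n) (e n x) = x :=
    Function.leftInverse_invFun (e n).injective x
  simpa [expectedDistortion, hlossless, hρ] using hD

end RateDistortion

section Laws

variable {S S' : Type} [Fintype S]

def pushforward [DecidableEq S'] (φ : S → S') (q : S → ℝ) (y : S') : ℝ :=
  ∑ s, if φ s = y then q s else 0

theorem IsProbDist.pushforward [Fintype S'] [DecidableEq S'] {q : S → ℝ} (hq : IsProbDist q)
    (φ : S → S') : IsProbDist (pushforward φ q) := by
  refine ⟨fun y => Finset.sum_nonneg fun s _ => ?_, ?_⟩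
  · split_ifs
    exacts [hq.1 s, le_rfl]
  · rw [← hq.2]
    unfold _root_.pushforward
    rw [Finset.sum_comm]
    simp

theorem IsProbDist.iidLaw {q : S → ℝ} (hq : IsProbDist q) (n : ℕ) :
    IsProbDist (_root_.iidLaw q n) :=
  ⟨fun _ => Finset.prod_nonneg fun _ _ => hq.1 _, by
    simp only [_root_.iidLaw, ← Fintype.sum_pow, hq.2, one_pow]⟩

theorem sum_iidLaw_pushforward_mul [Fintype S'] [DecidableEq S'] (φ : S → S') (q : S → ℝ)
    (n : ℕ) (h : (Fin n → S') → ℝ) :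
    ∑ y, iidLaw (pushforward φ q) n y * h y = ∑ x, iidLaw q n x * h (φ ∘ x) := by
  have hfiber (y : Fin n → S') :
      iidLaw (pushforward φ q) n y = ∑ x, if φ ∘ x = y then iidLaw q n x else 0 := by
    simp only [iidLaw, pushforward, Fintype.prod_sum, Finset.prod_ite_zero, funext_iff,
      Function.comp_apply, Finset.mem_univ, true_implies]
  simp only [hfiber, Finset.sum_mul, ite_mul, zero_mul]
  rw [Finset.sum_comm]
  simp

end Laws

section CodeTransfer

variable {S S' T T' : Type} [Fintype S]

theorem expectedDistortion_nonneg {n : ℕ} {law : (Fin n → S) → ℝ} {ρ : S → T → ℝ}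
    (hlaw : ∀ x, 0 ≤ law x) (hρ : ∀ s t, 0 ≤ ρ s t) (code : (Fin n → S) → Fin n → T) :
    0 ≤ expectedDistortion law ρ code :=
  Finset.sum_nonneg fun x _ => mul_nonneg (hlaw x)
    (mul_nonneg (by positivity) (Finset.sum_nonneg fun i _ => hρ _ _))

theorem inv_mul_sum_le {n : ℕ} (hn : 0 < n) {w : Fin n → ℝ} {M : ℝ} (hw : ∀ i, w i ≤ M) :
    (n : ℝ)⁻¹ * ∑ i, w i ≤ M := by
  rw [inv_mul_le_iff₀ (by positivity)]
  simpa using Finset.sum_le_sum fun i (_ : i ∈ Finset.univ) => hw i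

theorem expectedDistortion_le {n : ℕ} (hn : 0 < n) {law : (Fin n → S) → ℝ} {ρ : S → T → ℝ}
    (hlaw : IsProbDist law) {M : ℝ} (hρ : ∀ s t, ρ s t ≤ M) (code : (Fin n → S) → Fin n → T) :
    expectedDistortion law ρ code ≤ M :=
  calc expectedDistortion law ρ code ≤ ∑ x, law x * M :=
        Finset.sum_le_sum fun x _ => mul_le_mul_of_nonneg_left
          (inv_mul_sum_le hn fun i => hρ _ _) (hlaw.1 x)
    _ = M := by rw [← Finset.sum_mul, hlaw.2, one_mul]

theorem expectedDistortion_comp_le [Fintype S'] [DecidableEq S'] {n : ℕ} (hn : 0 < n)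
    {q : S → ℝ} (hq : IsProbDist q) {ρ : S → T → ℝ} {ρ' : S' → T' → ℝ}
    {φ : S → S'} {ψ : T' → T} {c : ℝ} (hc : ∀ s t, ρ s (ψ t) ≤ ρ' (φ s) t + c)
    (code : (Fin n → S') → Fin n → T') :
    expectedDistortion (iidLaw q n) ρ (fun x => ψ ∘ code (φ ∘ x)) ≤
      expectedDistortion (iidLaw (pushforward φ q) n) ρ' code + c := by
  have hq' := hq.iidLaw n
  have hpoint (x : Fin n → S) : (n : ℝ)⁻¹ * ∑ i, ρ (x i) (ψ (code (φ ∘ x) i)) ≤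
      (n : ℝ)⁻¹ * ∑ i, ρ' (φ (x i)) (code (φ ∘ x) i) + c := by
    have hsum := Finset.sum_le_sum fun i (_ : i ∈ Finset.univ) => hc (x i) (code (φ ∘ x) i)
    rw [Finset.sum_add_distrib, Finset.sum_const, Finset.card_univ, Fintype.card_fin,
      nsmul_eq_mul] at hsum
    calc (n : ℝ)⁻¹ * ∑ i, ρ (x i) (ψ (code (φ ∘ x) i))
        ≤ (n : ℝ)⁻¹ * (∑ i, ρ' (φ (x i)) (code (φ ∘ x) i) + n * c) := by gcongr
      _ = _ := by field_simp
  calc expectedDistortion (iidLaw q n) ρ (fun x => ψ ∘ code (φ ∘ x))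
      ≤ ∑ x, iidLaw q n x * ((n : ℝ)⁻¹ * ∑ i, ρ' (φ (x i)) (code (φ ∘ x) i) + c) :=
        Finset.sum_le_sum fun x _ => mul_le_mul_of_nonneg_left (hpoint x) (hq'.1 x)
    _ = _ := by
      simp only [mul_add, Finset.sum_add_distrib, ← Finset.sum_mul, hq'.2, one_mul,
        expectedDistortion, sum_iidLaw_pushforward_mul]
      rfl

theorem achievableRates_pushforward_subset [Fintype S'] [DecidableEq S'] {q : S → ℝ}
    (hq : IsProbDist q) {ρ : S → T → ℝ} {ρ' : S' → T' → ℝ} (hρ : ∀ s t, 0 ≤ ρ s t)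
    (hρ' : ∀ s t, 0 ≤ ρ' s t) {M : ℝ} (hM : ∀ s t, ρ' s t ≤ M)
    {φ : S → S'} {ψ : T' → T} {c : ℝ} (hc : ∀ s t, ρ s (ψ t) ≤ ρ' (φ s) t + c) (D : ℝ) :
    achievableRates (iidLaw (pushforward φ q)) ρ' D ⊆ achievableRates (iidLaw q) ρ (D + c) := by
  rintro R ⟨enc, dec, hD⟩
  refine ⟨fun n x => enc n (φ ∘ x), fun n k => ψ ∘ dec n k, ?_⟩
  set g := fun n => expectedDistortion (iidLaw (pushforward φ q) n) ρ' (fun y => dec n (enc n y))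
  have hg_le : ∀ᶠ n in atTop, g n ≤ M := (eventually_gt_atTop 0).mono fun n hn =>
    expectedDistortion_le hn ((hq.pushforward φ).iidLaw n) hM _
  have hg_ge (n : ℕ) : 0 ≤ g n :=
    expectedDistortion_nonneg ((hq.pushforward φ).iidLaw n).1 hρ' _
  calc limsup (fun n => expectedDistortion (iidLaw q n) ρ
        (fun x => ψ ∘ dec n (enc n (φ ∘ x)))) atTop
      ≤ limsup (fun n => g n + c) atTop := by
        refine limsup_le_limsup ?_ ?_ ?_
        · filter_upwards [eventually_gt_atTop 0] with n hn
          exact expectedDistortion_comp_le hn hq hc (fun y => dec n (enc n y))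
        · exact isCoboundedUnder_le_of_le atTop fun n =>
            expectedDistortion_nonneg (hq.iidLaw n).1 hρ _
        · exact isBoundedUnder_of_eventually_le (a := M + c)
            (hg_le.mono fun n hn => by gcongr)
    _ = limsup g atTop + c := limsup_add_const atTop g c
        (isBoundedUnder_of_eventually_le hg_le) (isCoboundedUnder_le_of_le atTop hg_ge)
    _ ≤ D + c := by gcongr

end CodeTransfer

section Markov

variable {𝕏 : Type}

theorem markovLaw_succ_cons (μ : 𝕏 → ℝ) (P : 𝕏 → 𝕏 → ℝ) {n : ℕ} (x₀ : 𝕏) (t : Fin n → 𝕏) :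
    markovLaw μ P (n + 1) (Fin.cons x₀ t) = μ x₀ * markovLaw (P x₀) P n t := by
  cases n with
  | zero => simp [markovLaw]
  | succ m => simp [markovLaw, Fin.prod_univ_succ]

variable [Fintype 𝕏]

theorem IsProbDist.markovLaw {P : 𝕏 → 𝕏 → ℝ} (hP : IsStochastic P) (n : ℕ) {μ : 𝕏 → ℝ}
    (hμ : IsProbDist μ) : IsProbDist (_root_.markovLaw μ P n) := by
  induction n generalizing μ with
  | zero => simp [IsProbDist, _root_.markovLaw]
  | succ n ih =>
    have hrow (x₀ : 𝕏) : IsProbDist (P x₀) := ⟨hP.1 x₀, hP.2 x₀⟩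
    refine ⟨fun x => ?_, ?_⟩
    · rw [← Fin.cons_self_tail x, markovLaw_succ_cons]
      exact mul_nonneg (hμ.1 _) ((ih (hrow _)).1 _)
    · rw [← (Fin.consEquiv fun _ => 𝕏).sum_comp, Fintype.sum_prod_type]
      change ∑ x₀, ∑ t, _root_.markovLaw μ P (n + 1) (Fin.cons x₀ t) = 1
      simp only [markovLaw_succ_cons, ← Finset.mul_sum, (ih (hrow _)).2, mul_one, hμ.2]

end Markov

section Blocks

variable {𝕏 𝕐 : Type}

def dropFront (τ : ℕ) {T : ℕ} (s : Fin T → 𝕏) : Fin (T - τ) → 𝕏 :=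
  fun i => s ⟨τ + i, by omega⟩

def padFront (τ : ℕ) {T : ℕ} (y₀ : 𝕐) (b : Fin (T - τ) → 𝕐) : Fin T → 𝕐 :=
  fun j => if h : (j : ℕ) < τ then y₀ else b ⟨j - τ, by omega⟩

theorem le_Dmax [Fintype 𝕏] [Fintype 𝕐] (d : 𝕏 → 𝕐 → ℝ) (x : 𝕏) (y : 𝕐) : d x y ≤ Dmax d :=
  le_ciSup (f := fun p : 𝕏 × 𝕐 => d p.1 p.2) (Set.finite_range _).bddAbove (x, y)

theorem projDist_eq_pushforward [Fintype 𝕏] [DecidableEq 𝕏] {T : ℕ} (q : (Fin T → 𝕏) → ℝ)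
    (τ : ℕ) : projDist q τ = pushforward (dropFront τ) q := by
  ext r
  simp only [projDist, pushforward, dropFront, funext_iff]

theorem blockDist_nonneg {d : 𝕏 → 𝕐 → ℝ} (hd : ∀ x y, 0 ≤ d x y) (T : ℕ) (s : Fin T → 𝕏)
    (t : Fin T → 𝕐) : 0 ≤ blockDist d T s t :=
  Finset.sum_nonneg fun _ _ => hd _ _

theorem blockDist_le [Fintype 𝕏] [Fintype 𝕐] (d : 𝕏 → 𝕐 → ℝ) (T : ℕ) (s : Fin T → 𝕏)
    (t : Fin T → 𝕐) : blockDist d T s t ≤ T * Dmax d := by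
  simpa [blockDist] using Finset.sum_le_sum fun j (_ : j ∈ Finset.univ) => le_Dmax d (s j) (t j)

theorem blockDist_self {d : 𝕏 → 𝕏 → ℝ} (hd : ∀ x, d x x = 0) (T : ℕ) (s : Fin T → 𝕏) :
    blockDist d T s s = 0 :=
  Finset.sum_eq_zero fun _ _ => hd _

theorem blockDist_padFront_le [Fintype 𝕏] [Fintype 𝕐] (d : 𝕏 → 𝕐 → ℝ) {τ T : ℕ} (hτT : τ ≤ T)
    (y₀ : 𝕐) (s : Fin T → 𝕏) (b : Fin (T - τ) → 𝕐) :
    blockDist d T s (padFront τ y₀ b) ≤ blockDist d (T - τ) (dropFront τ s) b + τ * Dmax d := by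
  have hT : τ + (T - τ) = T := Nat.add_sub_cancel' hτT
  rw [blockDist, ← Fin.sum_congr' _ hT, Fin.sum_univ_add, add_comm]
  have htail : ∑ i : Fin (T - τ), d (s ((Fin.natAdd τ i).cast hT))
      (padFront τ y₀ b ((Fin.natAdd τ i).cast hT)) = blockDist d (T - τ) (dropFront τ s) b := by
    simp only [padFront, Fin.val_cast, Fin.val_natAdd, add_lt_iff_neg_left, not_lt_zero,
      ↓reduceDIte, add_tsub_cancel_left, Fin.eta, blockDist, dropFront]
    rfl
  have hhead : ∑ i : Fin τ, d (s ((Fin.castAdd (T - τ) i).cast hT))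
      (padFront τ y₀ b ((Fin.castAdd (T - τ) i).cast hT)) ≤ τ * Dmax d := by
    calc _ ≤ ∑ _i : Fin τ, Dmax d := Finset.sum_le_sum fun i _ => le_Dmax d _ _
      _ = τ * Dmax d := by simp
  rw [htail]
  gcongr

end Blocks

theorem bia_rd_le_proj_rd_general
    {𝕏 : Type} [Fintype 𝕏] [DecidableEq 𝕏] (hcard : 2 ≤ Fintype.card 𝕏)
    (d : 𝕏 → 𝕏 → ℝ) (hdnn : ∀ x y, 0 ≤ d x y)
    (hdiag : ∀ x, d x x = 0)
    (P : 𝕏 → 𝕏 → ℝ) (hP : IsStochastic P)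
    (π' : 𝕏 → ℝ) (hπ' : IsProbDist π')
    (τ T : ℕ) (hτT : τ < T)
    (D : ℝ) (hD : 0 < D) :
    biaRDE π' P d T (((T : ℝ) - (τ : ℝ)) * D + (τ : ℝ) * Dmax d) ≤
      projRDE π' P d T τ (((T : ℝ) - (τ : ℝ)) * D) := by
  have : Nonempty 𝕏 := Fintype.card_pos_iff.mp (by omega)
  have hlevel : 0 ≤ ((T : ℝ) - τ) * D :=
    mul_nonneg (sub_nonneg.2 (by exact_mod_cast hτT.le)) hD.le
  refine RDE_le_RDE ?_ (achievableRates_nonempty (blockDist_self hdiag _) hlevel)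
  rw [projDist_eq_pushforward]
  exact achievableRates_pushforward_subset (hπ'.markovLaw hP T) (blockDist_nonneg hdnn T)
    (blockDist_nonneg hdnn (T - τ)) (blockDist_le d (T - τ))
    (blockDist_padFront_le d hτT.le (Classical.arbitrary 𝕏)) _

/-- **Equation (22).** Any code for the projected source `J_τ(X^T_{[π',P]})`
can be used for the full BIA `X^T_{[π',P]}` source at the cost of at most `τ D_max` extra
distortion per block: `R^E_{X^T_{[π',P]}}((T−τ)D + τ D_max) ≤ R^E_{J_τ(X^T_{[π',P]})}((T−τ)D)`. -/
theorem bia_rd_le_proj_rd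
    {𝕏 : Type} [Fintype 𝕏] [DecidableEq 𝕏] (hcard : 2 ≤ Fintype.card 𝕏)
    (d : 𝕏 → 𝕏 → ℝ) (hdnn : ∀ x y, 0 ≤ d x y)
    (hdiag : ∀ x, d x x = 0) (hdpos : ∀ x y, x ≠ y → 0 < d x y)
    (P : 𝕏 → 𝕏 → ℝ) (hP : IsStochastic P) (hPia : IsIrreducibleAperiodic P)
    (π : 𝕏 → ℝ) (hπ : IsProbDist π) (hπstat : IsStationaryDist P π)
    (π' : 𝕏 → ℝ) (hπ' : IsProbDist π')
    (τ T : ℕ) (hτ : 0 < τ) (hτT : τ < T)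
    (D : ℝ) (hD : 0 < D) :
    biaRDE π' P d T (((T : ℝ) - (τ : ℝ)) * D + (τ : ℝ) * Dmax d) ≤
      projRDE π' P d T τ (((T : ℝ) - (τ : ℝ)) * D) :=
  bia_rd_le_proj_rd_general hcard d hdnn hdiag P hP π' hπ' τ T hτT D hD
end
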